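/- Symmetric square condition: AB = BA = C; more precisely, the multiplication maps induce k-vector space isomorphisms A ⊗_V B ≅ C and B ⊗_V A ≅ C. -/
import Mathlib


open scoped TensorProduct
open TensorProduct

/-- A symmetric Markov extension `N ⊆ M` of `k`-algebras satisfying the symmetric
product and weak irreducibility assumptions, together with its Jones tower
`N ⊆ M ⊆ M₁ ⊆ M₂` (the ambient algebra `R` plays the role of `M₂`), the
normalized trace `T = T₂` and the depth two conditions. -/
structure D2 (k : Type*) [Field k] (R : Type*) [Ring R] [Algebra k R] where
  N : Subalgebra k R
  M : Subalgebra k R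
  M1 : Subalgebra k R
  hNM : N ≤ M
  hMM1 : M ≤ M1
  E : R →ₗ[k] R
  EM : R →ₗ[k] R
  EM1 : R →ₗ[k] R
  lam : k
  lam_ne : lam ≠ 0
  e1 : R
  e2 : R
  T : R →ₗ[k] k
  -- Markov extension data for E : M → N
  nE : ℕ
  xb : Fin nE → R
  yb : Fin nE → R
  hxb : ∀ i, xb i ∈ M
  hyb : ∀ i, yb i ∈ M
  hE_mem : ∀ x ∈ M, E x ∈ N
  hE_one : E 1 = 1
  hE_left : ∀ n ∈ N, ∀ x ∈ M, E (n * x) = n * E x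
  hE_right : ∀ n ∈ N, ∀ x ∈ M, E (x * n) = E x * n
  hdual1 : ∀ m ∈ M, ∑ i, E (m * xb i) * yb i = m
  hdual2 : ∀ m ∈ M, ∑ i, xb i * E (yb i * m) = m
  hindex : ∑ i, xb i * yb i = lam⁻¹ • (1 : R)
  hindex' : ∑ i, yb i * xb i = lam⁻¹ • (1 : R)
  -- the normalized trace (T₂ on M₂ = R; it restricts to T on N, T₀ on M, T₁ on M₁)
  hT_one : T 1 = 1
  hT_tr : ∀ x y : R, T (x * y) = T (y * x)
  hTE : ∀ x ∈ M, T (E x) = T x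
  hTEM : ∀ x ∈ M1, T (EM x) = T x
  hTEM1 : ∀ x : R, T (EM1 x) = T x
  -- symmetry of the Markov extension: E u = u E for all u ∈ U = C_M(N)
  hsymm : ∀ u ∈ M, (∀ y ∈ N, u * y = y * u) → ∀ x ∈ M, E (u * x) = E (x * u)
  -- the basic construction M₁ = M e₁ M
  he1_mem : e1 ∈ M1
  he1_idem : e1 * e1 = e1
  he1_N : ∀ y ∈ N, e1 * y = y * e1
  hM1_gen : M1.toSubmodule = Submodule.span k {z : R | ∃ m ∈ M, ∃ m' ∈ M, z = m * e1 * m'}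
  hEM_mem : ∀ x ∈ M1, EM x ∈ M
  hEM_one : EM 1 = 1
  hEM_left : ∀ m ∈ M, ∀ x ∈ M1, EM (m * x) = m * EM x
  hEM_right : ∀ m ∈ M, ∀ x ∈ M1, EM (x * m) = EM x * m
  hEM_e1 : ∀ m ∈ M, ∀ m' ∈ M, EM (m * e1 * m') = lam • (m * m')
  he1_jones : ∀ x ∈ M, e1 * x * e1 = e1 * E x
  he1_jones' : ∀ x ∈ M, e1 * E x = E x * e1
  -- the iterated basic construction M₂ = M₁ e₂ M₁ (M₂ = R is the ambient algebra)
  he2_idem : e2 * e2 = e2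
  he2_M : ∀ m ∈ M, e2 * m = m * e2
  hM2_gen : (⊤ : Submodule k R) = Submodule.span k {z : R | ∃ x ∈ M1, ∃ y ∈ M1, z = x * e2 * y}
  hEM1_mem : ∀ x : R, EM1 x ∈ M1
  hEM1_one : EM1 1 = 1
  hEM1_left : ∀ m ∈ M1, ∀ x : R, EM1 (m * x) = m * EM1 x
  hEM1_right : ∀ m ∈ M1, ∀ x : R, EM1 (x * m) = EM1 x * m
  hEM1_e2 : ∀ x ∈ M1, ∀ y ∈ M1, EM1 (x * e2 * y) = lam • (x * y)
  he2_jones : ∀ x ∈ M1, e2 * x * e2 = e2 * EM x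
  he2_jones' : ∀ x ∈ M1, e2 * EM x = EM x * e2
  -- braid-like relations and Pimsner-Popa relations
  hbraid1 : e1 * e2 * e1 = lam • e1
  hbraid2 : e2 * e1 * e2 = lam • e2
  hPP1 : ∀ x ∈ M1, x * e1 = lam⁻¹ • (EM (x * e1) * e1)
  hPP1' : ∀ x ∈ M1, e1 * x = lam⁻¹ • (e1 * EM (e1 * x))
  hPP2 : ∀ x : R, x * e2 = lam⁻¹ • (EM1 (x * e2) * e2)
  hPP2' : ∀ x : R, e2 * x = lam⁻¹ • (e2 * EM1 (e2 * x))
  -- weak irreducibility: U = C_M(N) is Kanzaki separable with symmetric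
  -- separability element ∑ sp i ⊗ sq i, and T₀ = T|U is non-degenerate on U
  nS : ℕ
  sp : Fin nS → R
  sq : Fin nS → R
  hsp : ∀ i, sp i ∈ M ∧ ∀ y ∈ N, sp i * y = y * sp i
  hsq : ∀ i, sq i ∈ M ∧ ∀ y ∈ N, sq i * y = y * sq i
  hsep_one : ∑ i, sp i * sq i = 1
  hsep_cas : ∀ u ∈ M, (∀ y ∈ N, u * y = y * u) →
      ∑ i, (u * sp i) ⊗ₜ[k] sq i = ∑ i, sp i ⊗ₜ[k] (sq i * u)
  hsep_symm : ∑ i, sp i ⊗ₜ[k] sq i = ∑ i, sq i ⊗ₜ[k] sp i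
  hU_nondeg : ∀ u ∈ M, (∀ y ∈ N, u * y = y * u) →
      (∀ u' ∈ M, (∀ y ∈ N, u' * y = y * u') → T (u * u') = 0) → u = 0
  -- depth two conditions
  nA : ℕ
  zb : Fin nA → R
  wb : Fin nA → R
  hzb : ∀ j, zb j ∈ M1 ∧ ∀ y ∈ N, zb j * y = y * zb j
  hwb : ∀ j, wb j ∈ M1 ∧ ∀ y ∈ N, wb j * y = y * wb j
  hdualA1 : ∀ x ∈ M1, ∑ j, EM (x * zb j) * wb j = x
  hdualA2 : ∀ x ∈ M1, ∑ j, zb j * EM (wb j * x) = x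
  nB : ℕ
  ub : Fin nB → R
  vb : Fin nB → R
  hub : ∀ i, ∀ y ∈ M, ub i * y = y * ub i
  hvb : ∀ i, ∀ y ∈ M, vb i * y = y * vb i
  hdualB1 : ∀ x : R, ∑ i, EM1 (x * ub i) * vb i = x
  hdualB2 : ∀ x : R, ∑ i, ub i * EM1 (vb i * x) = x

namespace D2

variable {k : Type*} [Field k] {R : Type*} [Ring R] [Algebra k R]

/-- `U = C_M(N)`. -/
def U (D : D2 k R) : Subalgebra k R := D.M ⊓ Subalgebra.centralizer k (D.N : Set R)

/-- `V = C_{M₁}(M)`. -/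
def V (D : D2 k R) : Subalgebra k R := D.M1 ⊓ Subalgebra.centralizer k (D.M : Set R)

/-- `W = C_{M₂}(M₁)`. -/
def W (D : D2 k R) : Subalgebra k R := Subalgebra.centralizer k (D.M1 : Set R)

/-- `A = C_{M₁}(N)`. -/
def A (D : D2 k R) : Subalgebra k R := D.M1 ⊓ Subalgebra.centralizer k (D.N : Set R)

/-- `B = C_{M₂}(M)`. -/
def B (D : D2 k R) : Subalgebra k R := Subalgebra.centralizer k (D.M : Set R)

/-- `C = C_{M₂}(N)`. -/
def C (D : D2 k R) : Subalgebra k R := Subalgebra.centralizer k (D.N : Set R)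

end D2

namespace D2

section Aux

variable {k : Type*} [Field k] {R : Type*} [Ring R] [Algebra k R] (D : D2 k R)

lemma mem_A_iff {a : R} : a ∈ D.A ↔ a ∈ D.M1 ∧ ∀ y ∈ D.N, y * a = a * y := by
  simp [D2.A, Algebra.mem_inf, Subalgebra.mem_centralizer_iff]

lemma mem_V_iff {v : R} : v ∈ D.V ↔ v ∈ D.M1 ∧ ∀ y ∈ D.M, y * v = v * y := by
  simp [D2.V, Algebra.mem_inf, Subalgebra.mem_centralizer_iff]

lemma mem_B_iff {b : R} : b ∈ D.B ↔ ∀ y ∈ D.M, y * b = b * y := by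
  simp [D2.B, Subalgebra.mem_centralizer_iff]

lemma mem_C_iff {c : R} : c ∈ D.C ↔ ∀ y ∈ D.N, y * c = c * y := by
  simp [D2.C, Subalgebra.mem_centralizer_iff]

lemma V_le_A : D.V ≤ D.A := by
  intro v hv
  rw [mem_V_iff] at hv
  exact (D.mem_A_iff).2 ⟨hv.1, fun y hy => hv.2 y (D.hNM hy)⟩

lemma V_le_B : D.V ≤ D.B := by
  intro v hv
  rw [mem_V_iff] at hv
  exact (D.mem_B_iff).2 hv.2

lemma ub_mem_B (i : Fin D.nB) : D.ub i ∈ D.B :=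
  (D.mem_B_iff).2 fun y hy => (D.hub i y hy).symm

lemma vb_mem_B (i : Fin D.nB) : D.vb i ∈ D.B :=
  (D.mem_B_iff).2 fun y hy => (D.hvb i y hy).symm

lemma A_mul_B_mem {a b : R} (ha : a ∈ D.A) (hb : b ∈ D.B) : a * b ∈ D.C := by
  rw [mem_C_iff]
  intro y hy
  have h1 := ((D.mem_A_iff).1 ha).2 y hy
  have h2 := (D.mem_B_iff).1 hb y (D.hNM hy)
  rw [← mul_assoc, h1, mul_assoc, h2, ← mul_assoc]

lemma B_mul_A_mem {a b : R} (ha : a ∈ D.A) (hb : b ∈ D.B) : b * a ∈ D.C := by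
  rw [mem_C_iff]
  intro y hy
  have h1 := ((D.mem_A_iff).1 ha).2 y hy
  have h2 := (D.mem_B_iff).1 hb y (D.hNM hy)
  rw [← mul_assoc, h2, mul_assoc, h1, ← mul_assoc]

/-- `φ(c) = ∑ᵢ E_{M₁}(c uᵢ) ⊗ vᵢ`, a linear section of multiplication. -/
noncomputable def phi : R →ₗ[k] R ⊗[k] R :=
  ∑ i, (TensorProduct.mk k R R).flip (D.vb i) ∘ₗ D.EM1 ∘ₗ LinearMap.mulRight k (D.ub i)

lemma phi_apply (c : R) : D.phi c = ∑ i, D.EM1 (c * D.ub i) ⊗ₜ[k] D.vb i := by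
  simp [phi, LinearMap.sum_apply]

/-- `φ'(c) = ∑ᵢ uᵢ ⊗ E_{M₁}(vᵢ c)`, another linear section of multiplication. -/
noncomputable def phi' : R →ₗ[k] R ⊗[k] R :=
  ∑ i, TensorProduct.mk k R R (D.ub i) ∘ₗ D.EM1 ∘ₗ LinearMap.mulLeft k (D.vb i)

lemma phi'_apply (c : R) : D.phi' c = ∑ i, D.ub i ⊗ₜ[k] D.EM1 (D.vb i * c) := by
  simp [phi', LinearMap.sum_apply]

lemma mul_phi (c : R) : LinearMap.mul' k R (D.phi c) = c := by
  rw [phi_apply, map_sum]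
  simp only [LinearMap.mul'_apply]
  exact D.hdualB1 c

lemma mul_phi' (c : R) : LinearMap.mul' k R (D.phi' c) = c := by
  rw [phi'_apply, map_sum]
  simp only [LinearMap.mul'_apply]
  exact D.hdualB2 c

lemma EM1_bub_mem_V {b : R} (hb : b ∈ D.B) (i : Fin D.nB) :
    D.EM1 (b * D.ub i) ∈ D.V := by
  rw [mem_V_iff]
  refine ⟨D.hEM1_mem _, fun y hy => ?_⟩
  rw [← D.hEM1_left y (D.hMM1 hy) _, ← D.hEM1_right y (D.hMM1 hy) _]
  congr 1
  rw [← mul_assoc, (D.mem_B_iff).1 hb y hy, mul_assoc, ← D.hub i y hy, ← mul_assoc]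

lemma EM1_vbb_mem_V {b : R} (hb : b ∈ D.B) (i : Fin D.nB) :
    D.EM1 (D.vb i * b) ∈ D.V := by
  rw [mem_V_iff]
  refine ⟨D.hEM1_mem _, fun y hy => ?_⟩
  rw [← D.hEM1_left y (D.hMM1 hy) _, ← D.hEM1_right y (D.hMM1 hy) _]
  congr 1
  rw [← mul_assoc, ← D.hvb i y hy, mul_assoc, (D.mem_B_iff).1 hb y hy, ← mul_assoc]

lemma EM1_cub_mem_A {c : R} (hc : c ∈ D.C) (i : Fin D.nB) :
    D.EM1 (c * D.ub i) ∈ D.A := by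
  rw [mem_A_iff]
  refine ⟨D.hEM1_mem _, fun y hy => ?_⟩
  have hyM1 : y ∈ D.M1 := D.hMM1 (D.hNM hy)
  rw [← D.hEM1_left y hyM1 _, ← D.hEM1_right y hyM1 _]
  congr 1
  rw [← mul_assoc, (D.mem_C_iff).1 hc y hy, mul_assoc, ← D.hub i y (D.hNM hy),
    ← mul_assoc]

lemma EM1_vbc_mem_A {c : R} (hc : c ∈ D.C) (i : Fin D.nB) :
    D.EM1 (D.vb i * c) ∈ D.A := by
  rw [mem_A_iff]
  refine ⟨D.hEM1_mem _, fun y hy => ?_⟩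
  have hyM1 : y ∈ D.M1 := D.hMM1 (D.hNM hy)
  rw [← D.hEM1_left y hyM1 _, ← D.hEM1_right y hyM1 _]
  congr 1
  rw [← mul_assoc, ← D.hvb i y (D.hNM hy), mul_assoc, (D.mem_C_iff).1 hc y hy,
    ← mul_assoc]

lemma phi_sub_mem {a b : R} (ha : a ∈ D.A) (hb : b ∈ D.B) :
    D.phi (a * b) - a ⊗ₜ[k] b ∈
      Submodule.span k {z : R ⊗[k] R | ∃ a ∈ D.A, ∃ v ∈ D.V, ∃ b ∈ D.B,
        z = (a * v) ⊗ₜ[k] b - a ⊗ₜ[k] (v * b)} := by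
  have haM1 : a ∈ D.M1 := ((D.mem_A_iff).1 ha).1
  have h1 : D.phi (a * b) = ∑ i, (a * D.EM1 (b * D.ub i)) ⊗ₜ[k] D.vb i := by
    rw [phi_apply]
    exact Finset.sum_congr rfl fun i _ => by rw [mul_assoc, D.hEM1_left a haM1]
  have h2 : a ⊗ₜ[k] b = ∑ i, a ⊗ₜ[k] (D.EM1 (b * D.ub i) * D.vb i) := by
    rw [← TensorProduct.tmul_sum, D.hdualB1 b]
  rw [h1, h2, ← Finset.sum_sub_distrib]
  exact Submodule.sum_mem _ fun i _ => Submodule.subset_span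
    ⟨a, ha, _, D.EM1_bub_mem_V hb i, _, D.vb_mem_B i, rfl⟩

lemma phi'_sub_mem {a b : R} (ha : a ∈ D.A) (hb : b ∈ D.B) :
    D.phi' (b * a) - b ⊗ₜ[k] a ∈
      Submodule.span k {z : R ⊗[k] R | ∃ b ∈ D.B, ∃ v ∈ D.V, ∃ a ∈ D.A,
        z = (b * v) ⊗ₜ[k] a - b ⊗ₜ[k] (v * a)} := by
  have haM1 : a ∈ D.M1 := ((D.mem_A_iff).1 ha).1
  have h1 : D.phi' (b * a) = ∑ i, D.ub i ⊗ₜ[k] (D.EM1 (D.vb i * b) * a) := by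
    rw [phi'_apply]
    exact Finset.sum_congr rfl fun i _ => by
      rw [← mul_assoc, D.hEM1_right a haM1]
  have h2 : b ⊗ₜ[k] a = ∑ i, (D.ub i * D.EM1 (D.vb i * b)) ⊗ₜ[k] a := by
    rw [← TensorProduct.sum_tmul, D.hdualB2 b]
  rw [h1, h2, ← Finset.sum_sub_distrib]
  refine Submodule.sum_mem _ fun i _ => ?_
  have : D.ub i ⊗ₜ[k] (D.EM1 (D.vb i * b) * a) -
      (D.ub i * D.EM1 (D.vb i * b)) ⊗ₜ[k] a
      = -((D.ub i * D.EM1 (D.vb i * b)) ⊗ₜ[k] a -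
        D.ub i ⊗ₜ[k] (D.EM1 (D.vb i * b) * a)) := (neg_sub _ _).symm
  rw [this]
  exact Submodule.neg_mem _ (Submodule.subset_span
    ⟨_, D.ub_mem_B i, _, D.EM1_vbb_mem_V hb i, a, ha, rfl⟩)

end Aux

end D2

open D2

/-- symmetric square condition: `AB = BA = C`; more precisely, the
multiplication maps induce `k`-vector space isomorphisms `A ⊗_V B ≅ C` and
`B ⊗_V A ≅ C`.  (Each relative tensor product is presented as the quotient of the
span of the elementary tensors by the span of the `V`-balancing relators; the
statement asserts that multiplication kills exactly the relators and maps the span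
of elementary tensors onto `C`.) -/
theorem stmt6 {k : Type*} [Field k] {R : Type*} [Ring R] [Algebra k R] (D : D2 k R) :
    let mul2 : R ⊗[k] R →ₗ[k] R := LinearMap.mul' k R
    let P : Submodule k (R ⊗[k] R) :=
      Submodule.span k {z : R ⊗[k] R | ∃ a ∈ D.A, ∃ b ∈ D.B, z = a ⊗ₜ[k] b}
    let Q : Submodule k (R ⊗[k] R) :=
      Submodule.span k {z : R ⊗[k] R | ∃ a ∈ D.A, ∃ v ∈ D.V, ∃ b ∈ D.B,
        z = (a * v) ⊗ₜ[k] b - a ⊗ₜ[k] (v * b)}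
    let P' : Submodule k (R ⊗[k] R) :=
      Submodule.span k {z : R ⊗[k] R | ∃ b ∈ D.B, ∃ a ∈ D.A, z = b ⊗ₜ[k] a}
    let Q' : Submodule k (R ⊗[k] R) :=
      Submodule.span k {z : R ⊗[k] R | ∃ b ∈ D.B, ∃ v ∈ D.V, ∃ a ∈ D.A,
        z = (b * v) ⊗ₜ[k] a - b ⊗ₜ[k] (v * a)}
    -- AB = C and BA = C:
    (∀ a ∈ D.A, ∀ b ∈ D.B, a * b ∈ D.C ∧ b * a ∈ D.C) ∧
    -- A ⊗_V B ≅ C via multiplication: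
    (Q ≤ P) ∧
    Submodule.map mul2 P = D.C.toSubmodule ∧
    (∀ t ∈ Q, mul2 t = 0) ∧
    (∀ t ∈ P, mul2 t = 0 → t ∈ Q) ∧
    -- B ⊗_V A ≅ C via multiplication:
    (Q' ≤ P') ∧
    Submodule.map mul2 P' = D.C.toSubmodule ∧
    (∀ t ∈ Q', mul2 t = 0) ∧
    (∀ t ∈ P', mul2 t = 0 → t ∈ Q') := by
  intro mul2 P Q P' Q'
  have hmul2 : mul2 = LinearMap.mul' k R := rfl
  -- part 1
  have part1 : ∀ a ∈ D.A, ∀ b ∈ D.B, a * b ∈ D.C ∧ b * a ∈ D.C :=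
    fun a ha b hb => ⟨D.A_mul_B_mem ha hb, D.B_mul_A_mem ha hb⟩
  -- Q ≤ P
  have hQP : Q ≤ P := by
    refine Submodule.span_le.2 ?_
    rintro _ ⟨a, ha, v, hv, b, hb, rfl⟩
    refine sub_mem ?_ ?_
    · exact Submodule.subset_span ⟨a * v, mul_mem ha (D.V_le_A hv), b, hb, rfl⟩
    · exact Submodule.subset_span ⟨a, ha, v * b, mul_mem (D.V_le_B hv) hb, rfl⟩
  have hQ'P' : Q' ≤ P' := by
    refine Submodule.span_le.2 ?_
    rintro _ ⟨b, hb, v, hv, a, ha, rfl⟩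
    refine sub_mem ?_ ?_
    · exact Submodule.subset_span ⟨b * v, mul_mem hb (D.V_le_B hv), a, ha, rfl⟩
    · exact Submodule.subset_span ⟨b, hb, v * a, mul_mem (D.V_le_A hv) ha, rfl⟩
  -- map mul2 P = C
  have hmapP : Submodule.map mul2 P = D.C.toSubmodule := by
    apply le_antisymm
    · show Submodule.map mul2 (Submodule.span k _) ≤ _
      rw [Submodule.map_span, Submodule.span_le]
      rintro _ ⟨_, ⟨a, ha, b, hb, rfl⟩, rfl⟩
      rw [hmul2, LinearMap.mul'_apply]
      exact (part1 a ha b hb).1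
    · intro c hc
      refine Submodule.mem_map.2 ⟨D.phi c, ?_, D.mul_phi c⟩
      rw [D.phi_apply c]
      exact Submodule.sum_mem _ fun i _ => Submodule.subset_span
        ⟨_, D.EM1_cub_mem_A hc i, _, D.vb_mem_B i, rfl⟩
  have hmapP' : Submodule.map mul2 P' = D.C.toSubmodule := by
    apply le_antisymm
    · show Submodule.map mul2 (Submodule.span k _) ≤ _
      rw [Submodule.map_span, Submodule.span_le]
      rintro _ ⟨_, ⟨b, hb, a, ha, rfl⟩, rfl⟩
      rw [hmul2, LinearMap.mul'_apply]
      exact (part1 a ha b hb).2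
    · intro c hc
      refine Submodule.mem_map.2 ⟨D.phi' c, ?_, D.mul_phi' c⟩
      rw [D.phi'_apply c]
      exact Submodule.sum_mem _ fun i _ => Submodule.subset_span
        ⟨_, D.ub_mem_B i, _, D.EM1_vbc_mem_A hc i, rfl⟩
  -- mul2 kills Q and Q'
  have hQker : ∀ t ∈ Q, mul2 t = 0 := by
    intro t ht
    have : Q ≤ LinearMap.ker mul2 := by
      refine Submodule.span_le.2 ?_
      rintro _ ⟨a, ha, v, hv, b, hb, rfl⟩
      simp only [SetLike.mem_coe, LinearMap.mem_ker, map_sub, hmul2,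
        LinearMap.mul'_apply, mul_assoc, sub_self]
    exact this ht
  have hQ'ker : ∀ t ∈ Q', mul2 t = 0 := by
    intro t ht
    have : Q' ≤ LinearMap.ker mul2 := by
      refine Submodule.span_le.2 ?_
      rintro _ ⟨b, hb, v, hv, a, ha, rfl⟩
      simp only [SetLike.mem_coe, LinearMap.mem_ker, map_sub, hmul2,
        LinearMap.mul'_apply, mul_assoc, sub_self]
    exact this ht
  -- injectivity modulo Q
  have hinj : ∀ t ∈ P, mul2 t = 0 → t ∈ Q := by
    intro t ht h0
    have hL : P ≤ Submodule.comap (LinearMap.id - D.phi ∘ₗ mul2) Q := by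
      refine Submodule.span_le.2 ?_
      rintro _ ⟨a, ha, b, hb, rfl⟩
      simp only [SetLike.mem_coe, Submodule.mem_comap, LinearMap.sub_apply,
        LinearMap.id_apply, LinearMap.comp_apply, hmul2, LinearMap.mul'_apply]
      have := D.phi_sub_mem ha hb
      have hneg := Submodule.neg_mem _ this
      rw [neg_sub] at hneg
      exact hneg
    have := hL ht
    simp only [Submodule.mem_comap, LinearMap.sub_apply, LinearMap.id_apply,
      LinearMap.comp_apply, h0, map_zero, sub_zero] at this
    exact this
  have hinj' : ∀ t ∈ P', mul2 t = 0 → t ∈ Q' := by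
    intro t ht h0
    have hL : P' ≤ Submodule.comap (LinearMap.id - D.phi' ∘ₗ mul2) Q' := by
      refine Submodule.span_le.2 ?_
      rintro _ ⟨b, hb, a, ha, rfl⟩
      simp only [SetLike.mem_coe, Submodule.mem_comap, LinearMap.sub_apply,
        LinearMap.id_apply, LinearMap.comp_apply, hmul2, LinearMap.mul'_apply]
      have := D.phi'_sub_mem ha hb
      have hneg := Submodule.neg_mem _ this
      rw [neg_sub] at hneg
      exact hneg
    have := hL ht
    simp only [Submodule.mem_comap, LinearMap.sub_apply, LinearMap.id_apply,
      LinearMap.comp_apply, h0, map_zero, sub_zero] at this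
    exact this
  exact ⟨part1, hQP, hmapP, hQker, hinj, hQ'P', hmapP', hQ'ker, hinj'⟩
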